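/- Assume n ≥ 17 and τ ∈ ℝ. Then for every ε > 0: ∫_0^∞ ε^{n−2} (ε² + r²)^{−n} r^{n+5} [ 2 f(r²) f′(r²) + r² f′(r²)² ] dr = J(ε²) · ∫_0^∞ (1 + r²)^{−n} r^{n+9} dr, where J(s) = 10·((n−10)/(n+8))·((n−8)/(n+6))·τ s² + ((n−10)/(n+8))·(75 − 4τ) s³ + ( (3/10)τ − 50 ) s⁴ + (23/2)·((n+10)/(n−12)) s⁵ − (11/10)·((n+10)/(n−12))·((n+12)/(n−14)) s⁶ + (3/80)·((n+10)/(n−12))·((n+12)/(n−14))·((n+14)/(n−16)) s⁷. -/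

import Mathlib

open MeasureTheory

/-- The cut-off profile `f(s) = τ + 5s − s² + s³/20`. -/
noncomputable def fpoly (τ s : ℝ) : ℝ := τ + 5 * s - s ^ 2 + s ^ 3 / 20

/-- The polynomial `J(s)` from Proposition 12 of the paper. -/
noncomputable def Jpoly (n : ℕ) (τ s : ℝ) : ℝ :=
  10 * (((n : ℝ) - 10) / ((n : ℝ) + 8)) * (((n : ℝ) - 8) / ((n : ℝ) + 6)) * τ * s ^ 2
    + (((n : ℝ) - 10) / ((n : ℝ) + 8)) * (75 - 4 * τ) * s ^ 3
    + ((3 / 10) * τ - 50) * s ^ 4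
    + (23 / 2) * (((n : ℝ) + 10) / ((n : ℝ) - 12)) * s ^ 5
    - (11 / 10) * (((n : ℝ) + 10) / ((n : ℝ) - 12)) * (((n : ℝ) + 12) / ((n : ℝ) - 14)) * s ^ 6
    + (3 / 80) * (((n : ℝ) + 10) / ((n : ℝ) - 12)) * (((n : ℝ) + 12) / ((n : ℝ) - 14)) *
        (((n : ℝ) + 14) / ((n : ℝ) - 16)) * s ^ 7

/-!
Write `M_p(ε) = ∫₀^∞ (ε² + r²)^(-n) r^p dr`. As a polynomial in `s = r²`,
`2 f f' + s f'²` has degree 5, so the integral is a combination of the six moments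
`M_p(ε)`, `p = n + 5, n + 7, …, n + 15`, all finite because `p + 1 < 2n` when `n ≥ 17`.
Integrating `d/dr [r^(p+1) (ε² + r²)^(1-n)]` gives `(2n - p - 3) M_{p+2} = (p + 1) ε² M_p`,
which expresses all six through `M_{n+9}(ε)`, and `r ↦ ε r` gives
`M_p(ε) = ε^(p+1-2n) M_p(1)`. Collecting the rational factors in `n` yields `J(ε²)`.
-/

open Set Real Filter

noncomputable def radialMoment (ν ε : ℝ) (p : ℕ) : ℝ :=
  ∫ r in Ioi (0 : ℝ), (ε ^ 2 + r ^ 2) ^ (-ν) * r ^ p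

section RadialMoment

variable {ν ε : ℝ}

lemma continuous_radialMoment_integrand (hε : ε ≠ 0) (p : ℕ) :
    Continuous fun r : ℝ => (ε ^ 2 + r ^ 2) ^ (-ν) * r ^ p :=
  ((continuous_const.add (continuous_pow 2)).rpow_const
    fun r => Or.inl (by positivity : ε ^ 2 + r ^ 2 ≠ 0)).mul (continuous_pow p)

lemma radialMoment_integrand_le {p : ℕ} {r : ℝ} (hν : 0 ≤ ν) (hr : 0 < r) :
    (ε ^ 2 + r ^ 2) ^ (-ν) * r ^ p ≤ r ^ ((p : ℝ) - 2 * ν) := by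
  calc (ε ^ 2 + r ^ 2) ^ (-ν) * r ^ p ≤ (r ^ 2) ^ (-ν) * r ^ p := by
        have h := rpow_le_rpow_of_nonpos (pow_pos hr 2) (le_add_of_nonneg_left (sq_nonneg ε))
          (neg_nonpos.mpr hν)
        gcongr
    _ = r ^ ((p : ℝ) - 2 * ν) := by
        rw [← rpow_natCast r p, ← rpow_natCast r 2, ← rpow_mul hr.le, ← rpow_add hr]
        ring_nf

lemma integrableOn_radialMoment_integrand (hε : ε ≠ 0) {p : ℕ} (hp : (p : ℝ) + 1 < 2 * ν) :
    IntegrableOn (fun r : ℝ => (ε ^ 2 + r ^ 2) ^ (-ν) * r ^ p) (Ioi 0) := by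
  have hcont := continuous_radialMoment_integrand (ν := ν) hε p
  have hν : 0 ≤ ν := by linarith [(Nat.cast_nonneg p : (0 : ℝ) ≤ p)]
  have near_zero : IntegrableOn (fun r : ℝ => (ε ^ 2 + r ^ 2) ^ (-ν) * r ^ p) (Ioc 0 1) :=
    (hcont.integrableOn_Icc (a := 0) (b := 1)).mono_set Ioc_subset_Icc_self
  have near_infty : IntegrableOn (fun r : ℝ => (ε ^ 2 + r ^ 2) ^ (-ν) * r ^ p) (Ioi 1) := by
    have hdecay : (p : ℝ) - 2 * ν < -1 := by linarith
    refine (integrableOn_Ioi_rpow_of_lt hdecay one_pos).integrable.mono'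
      hcont.aestronglyMeasurable ?_
    filter_upwards [ae_restrict_mem measurableSet_Ioi] with r (hr : 1 < r)
    rw [Real.norm_of_nonneg (by positivity)]
    exact radialMoment_integrand_le hν (by linarith)
  simpa [Ioc_union_Ioi_eq_Ioi zero_le_one] using near_zero.union near_infty

lemma radialMoment_add_two (hε : ε ≠ 0) {p : ℕ} (hp : (p : ℝ) + 3 < 2 * ν) :
    (2 * ν - (p + 3)) * radialMoment ν ε (p + 2) = (p + 1) * ε ^ 2 * radialMoment ν ε p := by
  set F : ℝ → ℝ := fun r => (ε ^ 2 + r ^ 2) ^ (-(ν - 1)) * r ^ (p + 1)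
  set F' : ℝ → ℝ := fun r => (p + 1) * ε ^ 2 * ((ε ^ 2 + r ^ 2) ^ (-ν) * r ^ p)
      + (p + 3 - 2 * ν) * ((ε ^ 2 + r ^ 2) ^ (-ν) * r ^ (p + 2))
  have hpos : ∀ r : ℝ, 0 < ε ^ 2 + r ^ 2 := fun r => by positivity
  have hderiv : ∀ x : ℝ, HasDerivAt F (F' x) x := by
    intro x
    have hx := (((hasDerivAt_pow 2 x).const_add (ε ^ 2)).rpow_const (p := -(ν - 1))
      (Or.inl (hpos x).ne')).mul (hasDerivAt_pow (p + 1) x)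
    refine hx.congr_deriv ?_
    rw [show -(ν - 1) - 1 = -ν by ring, show -(ν - 1) = 1 + -ν by ring, rpow_add (hpos x),
      rpow_one]
    push_cast
    ring
  have hi : IntegrableOn (fun r : ℝ => (ε ^ 2 + r ^ 2) ^ (-ν) * r ^ p) (Ioi 0) :=
    integrableOn_radialMoment_integrand hε (by linarith)
  have hi₂ : IntegrableOn (fun r : ℝ => (ε ^ 2 + r ^ 2) ^ (-ν) * r ^ (p + 2)) (Ioi 0) :=
    integrableOn_radialMoment_integrand hε (by push_cast; linarith)
  have hF_top : Tendsto F atTop (nhds 0) := by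
    have hdecay : Tendsto (fun x : ℝ => x ^ (((p + 1 : ℕ) : ℝ) - 2 * (ν - 1))) atTop (nhds 0) := by
      simpa using tendsto_rpow_neg_atTop (y := 2 * (ν - 1) - ((p + 1 : ℕ) : ℝ))
        (by push_cast; linarith)
    refine squeeze_zero' ?_ ?_ hdecay
    · filter_upwards [eventually_ge_atTop 0] with x hx
      positivity
    · filter_upwards [eventually_gt_atTop 0] with x hx
      exact radialMoment_integrand_le (by linarith) hx
  have hF_zero : F 0 = 0 := by simp [F]
  have := integral_Ioi_of_hasDerivAt_of_tendsto' (fun x _ => hderiv x)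
    ((hi.const_mul _).add (hi₂.const_mul _)) hF_top
  rw [integral_add (hi.const_mul _) (hi₂.const_mul _), integral_const_mul, integral_const_mul,
    hF_zero] at this
  unfold radialMoment
  linarith

lemma radialMoment_eq_mul_radialMoment_one (hε : 0 < ε) (q : ℕ) :
    radialMoment ν ε q = (ε ^ 2) ^ (-ν) * ε ^ (q + 1) * radialMoment ν 1 q := by
  have hsub := integral_comp_mul_left_Ioi
    (fun r : ℝ => (ε ^ 2 + r ^ 2) ^ (-ν) * r ^ q) 0 hε
  have hscale : ∀ x ∈ Ioi (0 : ℝ), (ε ^ 2 + (ε * x) ^ 2) ^ (-ν) * (ε * x) ^ q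
      = (ε ^ 2) ^ (-ν) * ε ^ q * ((1 ^ 2 + x ^ 2) ^ (-ν) * x ^ q) := by
    intro x _
    rw [show ε ^ 2 + (ε * x) ^ 2 = ε ^ 2 * (1 ^ 2 + x ^ 2) by ring,
      mul_rpow (by positivity) (by positivity)]
    ring
  rw [mul_zero, setIntegral_congr_fun measurableSet_Ioi hscale, integral_const_mul,
    smul_eq_mul] at hsub
  unfold radialMoment
  rw [← mul_inv_cancel_left₀ hε.ne' (∫ r in Ioi (0 : ℝ), (ε ^ 2 + r ^ 2) ^ (-ν) * r ^ q), ← hsub]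
  ring

lemma pow_mul_radialMoment_natCast (hε : 0 < ε) {m n q k : ℕ}
    (h : m + (q + 1) = 2 * n + 2 * k) :
    ε ^ m * radialMoment n ε q = (ε ^ 2) ^ k * radialMoment n 1 q := by
  have hpow : ε ^ m * ε ^ (q + 1) = (ε ^ 2) ^ n * (ε ^ 2) ^ k := by
    rw [← pow_mul, ← pow_mul, ← pow_add, ← pow_add, h]
  rw [radialMoment_eq_mul_radialMoment_one hε, rpow_neg (by positivity), rpow_natCast]
  calc ε ^ m * (((ε ^ 2) ^ n)⁻¹ * ε ^ (q + 1) * radialMoment n 1 q)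
      = ε ^ m * ε ^ (q + 1) / (ε ^ 2) ^ n * radialMoment n 1 q := by ring
    _ = (ε ^ 2) ^ k * radialMoment n 1 q := by
      rw [hpow, mul_div_cancel_left₀ _ (by positivity)]

lemma integral_mul_sum_eq_sum_radialMoment (hε : ε ≠ 0) {m q : ℕ} (c : Fin m → ℝ)
    (hq : (q : ℝ) + 2 * m - 1 < 2 * ν) :
    ∫ r in Ioi (0 : ℝ), (ε ^ 2 + r ^ 2) ^ (-ν) * r ^ q * ∑ k, c k * (r ^ 2) ^ (k : ℕ)
      = ∑ k, c k * radialMoment ν ε (q + 2 * k) := by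
  have hterm : ∀ k : Fin m, IntegrableOn
      (fun r : ℝ => c k * ((ε ^ 2 + r ^ 2) ^ (-ν) * r ^ (q + 2 * k))) (Ioi 0) := by
    intro k
    have hk : ((k : ℕ) : ℝ) + 1 ≤ m := by exact_mod_cast k.isLt
    exact (integrableOn_radialMoment_integrand hε (by push_cast; linarith)).const_mul _
  calc ∫ r in Ioi (0 : ℝ), (ε ^ 2 + r ^ 2) ^ (-ν) * r ^ q * ∑ k, c k * (r ^ 2) ^ (k : ℕ)
      = ∫ r in Ioi (0 : ℝ), ∑ k, c k * ((ε ^ 2 + r ^ 2) ^ (-ν) * r ^ (q + 2 * k)) := by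
        congr 1
        ext r
        rw [Finset.mul_sum]
        congr 1
        ext k
        rw [pow_add, pow_mul]
        ring
    _ = ∑ k, c k * radialMoment ν ε (q + 2 * k) := by
        rw [integral_finsetSum _ fun k _ => hterm k]
        simp only [integral_const_mul, radialMoment]

end RadialMoment

lemma deriv_fpoly (τ s : ℝ) : deriv (fpoly τ) s = 5 - 2 * s + 3 * s ^ 2 / 20 := by
  have h : HasDerivAt (fpoly τ)
      (0 + 5 * 1 - ((2 : ℕ) * s ^ (2 - 1)) + (3 : ℕ) * s ^ (3 - 1) / 20) s :=
    (((hasDerivAt_const s τ).add ((hasDerivAt_id s).const_mul 5)).sub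
      (hasDerivAt_pow 2 s)).add ((hasDerivAt_pow 3 s).div_const 20)
  rw [h.deriv]
  norm_num

noncomputable def energyCoeff (τ : ℝ) : Fin 6 → ℝ :=
  ![10 * τ, 75 - 4 * τ, 3 / 10 * τ - 50, 23 / 2, -(11 / 10), 3 / 80]

lemma sum_energyCoeff_mul (τ : ℝ) (g : ℕ → ℝ) :
    ∑ k : Fin 6, energyCoeff τ k * g k = 10 * τ * g 0 + (75 - 4 * τ) * g 1
      + (3 / 10 * τ - 50) * g 2 + 23 / 2 * g 3 - 11 / 10 * g 4 + 3 / 80 * g 5 := by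
  simp [Fin.sum_univ_six, energyCoeff, sub_eq_add_neg]

lemma two_mul_fpoly_mul_deriv_add (τ s : ℝ) :
    2 * fpoly τ s * deriv (fpoly τ) s + s * deriv (fpoly τ) s ^ 2
      = ∑ k : Fin 6, energyCoeff τ k * s ^ (k : ℕ) := by
  rw [sum_energyCoeff_mul (g := fun k => s ^ k), deriv_fpoly, fpoly]
  ring

lemma sum_energyCoeff_mul_radialMoment_eq_Jpoly {n : ℕ} (hn : 17 ≤ n) (τ : ℝ) {ε : ℝ}
    (hε : ε ≠ 0) :
    (ε ^ 2) ^ 4 * ∑ k : Fin 6, energyCoeff τ k * radialMoment n ε (n + 5 + 2 * k)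
      = Jpoly n τ (ε ^ 2) * radialMoment n ε (n + 9) := by
  have hn' : (17 : ℝ) ≤ n := by exact_mod_cast hn
  have h12 : (n : ℝ) - 12 ≠ 0 := by linarith
  have h14 : (n : ℝ) - 14 ≠ 0 := by linarith
  have h16 : (n : ℝ) - 16 ≠ 0 := by linarith
  have step : ∀ p q : ℕ, q = p + 2 → (p : ℝ) + 3 < 2 * n →
      (2 * n - (p + 3)) * radialMoment n ε q = (p + 1) * ε ^ 2 * radialMoment n ε p := by
    rintro p q rfl hp
    exact radialMoment_add_two hε hp
  have h7 : radialMoment n ε (n + 7) = (n - 10) * radialMoment n ε (n + 9) / ((n + 8) * ε ^ 2) := by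
    have e := step (n + 7) (n + 9) rfl (by push_cast; linarith)
    rw [eq_div_iff (by positivity)]
    push_cast at e
    linear_combination -e
  have h5 : radialMoment n ε (n + 5) = (n - 8) * radialMoment n ε (n + 7) / ((n + 6) * ε ^ 2) := by
    have e := step (n + 5) (n + 7) rfl (by push_cast; linarith)
    rw [eq_div_iff (by positivity)]
    push_cast at e
    linear_combination -e
  have h11 :
      radialMoment n ε (n + 11) = (n + 10) * ε ^ 2 * radialMoment n ε (n + 9) / (n - 12) := by
    have e := step (n + 9) (n + 11) rfl (by push_cast; linarith)
    rw [eq_div_iff h12]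
    push_cast at e
    linear_combination e
  have h13 :
      radialMoment n ε (n + 13) = (n + 12) * ε ^ 2 * radialMoment n ε (n + 11) / (n - 14) := by
    have e := step (n + 11) (n + 13) rfl (by push_cast; linarith)
    rw [eq_div_iff h14]
    push_cast at e
    linear_combination e
  have h15 :
      radialMoment n ε (n + 15) = (n + 14) * ε ^ 2 * radialMoment n ε (n + 13) / (n - 16) := by
    have e := step (n + 13) (n + 15) rfl (by push_cast; linarith)
    rw [eq_div_iff h16]
    push_cast at e
    linear_combination e
  rw [sum_energyCoeff_mul (g := fun k => radialMoment n ε (n + 5 + 2 * k))]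
  simp only [add_assoc, Nat.reduceMul, Nat.reduceAdd, mul_zero, add_zero]
  rw [h15, h13, h11, h5, h7, Jpoly]
  field_simp
  ring

theorem stmt_16 (n : ℕ) (hn : 17 ≤ n) (τ : ℝ) (ε : ℝ) (hε : 0 < ε) :
    ∫ r in Set.Ioi (0 : ℝ),
        ε ^ (n - 2) * (ε ^ 2 + r ^ 2) ^ (-(n : ℝ)) * r ^ (n + 5) *
          (2 * fpoly τ (r ^ 2) * deriv (fpoly τ) (r ^ 2)
            + r ^ 2 * (deriv (fpoly τ) (r ^ 2)) ^ 2)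
      = Jpoly n τ (ε ^ 2) *
          ∫ r in Set.Ioi (0 : ℝ), (1 + r ^ 2) ^ (-(n : ℝ)) * r ^ (n + 9) := by
  have hn' : (17 : ℝ) ≤ n := by exact_mod_cast hn
  have hA := sum_energyCoeff_mul_radialMoment_eq_Jpoly hn τ hε.ne'
  have hB := pow_mul_radialMoment_natCast hε (m := n - 2) (n := n) (q := n + 9) (k := 4) (by omega)
  calc _ = ε ^ (n - 2) * ∫ r in Ioi (0 : ℝ), (ε ^ 2 + r ^ 2) ^ (-(n : ℝ)) * r ^ (n + 5) *
          ∑ k, energyCoeff τ k * (r ^ 2) ^ (k : ℕ) := by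
        rw [← integral_const_mul]
        congr 1 with r
        rw [← two_mul_fpoly_mul_deriv_add]
        ring
    _ = ε ^ (n - 2) * ∑ k, energyCoeff τ k * radialMoment n ε (n + 5 + 2 * k) := by
        rw [integral_mul_sum_eq_sum_radialMoment hε.ne' _ (by push_cast; linarith)]
    _ = Jpoly n τ (ε ^ 2) * radialMoment n 1 (n + 9) := by
        refine mul_left_cancel₀ (pow_ne_zero 4 (by positivity : ε ^ 2 ≠ 0)) ?_
        linear_combination ε ^ (n - 2) * hA + Jpoly n τ (ε ^ 2) * hB
    _ = _ := by simp only [radialMoment, one_pow]
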